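/- arXiv:1807.10918 — 4 statements merged into one kernel-verified Lean document; each statement's English description precedes it below -/
import Mathlib

section
/- If x and y are admissible infinite decimals and there is a constant C ≥ 0 such that |x_k − y_k| ≤ C·10^{-k} for all k ≥ 0 (where x_k, y_k are the k-th rational truncations), then x = y, i.e., they have the same integer part and the same digit sequence. -/
/-- An infinite decimal: integer part `z` and digits `d : ℕ → ℕ` (indices ≥ 1 used),
each digit between 0 and 9. -/
structure InfDec where
  z : ℤ
  d : ℕ → ℕ
  d_le : ∀ k, 1 ≤ k → d k ≤ 9

/-- The `k`-th rational truncation `x_k = z + Σ_{i=1}^k d(i)·10^{-i}`. -/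
def InfDec.trunc (x : InfDec) (k : ℕ) : ℚ :=
  (x.z : ℚ) + ∑ i ∈ Finset.Icc 1 k, (x.d i : ℚ) / 10 ^ i

/-- The real value `val(x) = z + Σ_{i=1}^∞ d(i)·10^{-i}`. -/
noncomputable def InfDec.val (x : InfDec) : ℝ :=
  (x.z : ℝ) + ∑' i : ℕ, (x.d (i + 1) : ℝ) / 10 ^ (i + 1)

/-- Admissibility: `d(k) < 9` for infinitely many `k`. -/
def InfDec.Admissible (x : InfDec) : Prop :=
  ∀ N : ℕ, ∃ k ≥ N, x.d k < 9

/-- The `m`-th truncation of a rational: `T_m(q) = ⌊10^m q⌋ / 10^m`. -/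
def Tq (m : ℕ) (q : ℚ) : ℚ := (⌊(10 : ℚ) ^ m * q⌋ : ℚ) / 10 ^ m

/-- The `m`-th truncation of a real: `T_m(r) = ⌊10^m r⌋ / 10^m`. -/
noncomputable def Tr (m : ℕ) (r : ℝ) : ℝ := (⌊(10 : ℝ) ^ m * r⌋ : ℝ) / 10 ^ m

/-- The `m`-th digit of a rational (`m ≥ 1`): `θ_m(q) = ⌊10^m q⌋ − 10·⌊10^{m−1} q⌋`. -/
def digq (m : ℕ) (q : ℚ) : ℤ := ⌊(10 : ℚ) ^ m * q⌋ - 10 * ⌊(10 : ℚ) ^ (m - 1) * q⌋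

lemma trunc_sub (x : InfDec) {k m : ℕ} (h : k ≤ m) :
    x.trunc m - x.trunc k = ∑ j ∈ Finset.Ioc k m, (x.d j : ℚ) / 10 ^ j := by
  unfold InfDec.trunc
  have h0 : ∀ n : ℕ, Finset.Icc 1 n = Finset.Ioc 0 n := by
    intro n; ext j; simp [Nat.lt_iff_add_one_le]
  rw [h0, h0, ← Finset.sum_Ioc_consecutive _ (Nat.zero_le k) h]
  ring

lemma nine_sum {k m : ℕ} (h : k ≤ m) :
    ∑ j ∈ Finset.Ioc k m, (9 : ℚ) / 10 ^ j = 1 / 10 ^ k - 1 / 10 ^ m := by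
  induction m, h using Nat.le_induction with
  | base => simp
  | succ n hn ih =>
    rw [Finset.sum_Ioc_succ_top hn, ih]
    rw [pow_succ]
    ring

lemma trunc_mono (x : InfDec) {k m : ℕ} (h : k ≤ m) : x.trunc k ≤ x.trunc m := by
  have := trunc_sub x h
  have hpos : 0 ≤ ∑ j ∈ Finset.Ioc k m, (x.d j : ℚ) / 10 ^ j :=
    Finset.sum_nonneg fun j _ => by positivity
  linarith

lemma tail_le (y : InfDec) {k m : ℕ} (h : k ≤ m) :
    y.trunc m - y.trunc k ≤ 1 / 10 ^ k - 1 / 10 ^ m := by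
  rw [trunc_sub y h, ← nine_sum h]
  apply Finset.sum_le_sum
  intro j hj
  have hj1 : 1 ≤ j := by have := (Finset.mem_Ioc.mp hj).1; omega
  have hd := y.d_le j hj1
  have h9 : (y.d j : ℚ) ≤ 9 := by exact_mod_cast hd
  gcongr

lemma tail_le' (y : InfDec) {k m : ℕ} (h : k < m) (hd : y.d m ≤ 8) :
    y.trunc m - y.trunc k ≤ 1 / 10 ^ k - 2 / 10 ^ m := by
  have h1 : y.trunc m - y.trunc (m - 1) = (y.d m : ℚ) / 10 ^ m := by
    rw [trunc_sub y (Nat.sub_le m 1)]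
    have : Finset.Ioc (m - 1) m = {m} := by
      have hm : 1 ≤ m := le_trans (Nat.succ_le_of_lt (Nat.pos_of_ne_zero ?_)) le_rfl
      · ext j
        simp only [Finset.mem_Ioc, Finset.mem_singleton]
        omega
      · omega
    rw [this, Finset.sum_singleton]
  have h2 : y.trunc (m - 1) - y.trunc k ≤ 1 / 10 ^ k - 1 / 10 ^ (m - 1) :=
    tail_le y (by omega)
  have hd' : (y.d m : ℚ) ≤ 8 := by exact_mod_cast hd
  have hpow : (10:ℚ) ^ (m - 1) * 10 = 10 ^ m := by
    rw [← pow_succ]; congr 1; omega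
  have h10 : (0:ℚ) < 10 ^ m := by positivity
  have h10' : (0:ℚ) < 10 ^ (m-1) := by positivity
  have key : 1 / 10 ^ (m-1) = (10:ℚ) / 10 ^ m := by
    rw [div_eq_div_iff (ne_of_gt h10') (ne_of_gt h10)]
    nlinarith [hpow]
  have hdd : (y.d m : ℚ) / 10 ^ m ≤ 8 / 10 ^ m := by gcongr
  rw [key] at h2
  have hsplit : y.trunc m - y.trunc k = (y.trunc m - y.trunc (m-1)) + (y.trunc (m-1) - y.trunc k) := by ring
  rw [hsplit, h1]
  have : (8:ℚ)/10^m - 10/10^m = -(2/10^m) := by ring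
  linarith

lemma grow (x y : InfDec) (hy : y.Admissible) (C : ℚ)
    (h : ∀ k : ℕ, |x.trunc k - y.trunc k| ≤ C / 10 ^ k)
    (m : ℕ) (hm : 1 / 10 ^ m ≤ x.trunc m - y.trunc m) : False := by
  have main : ∀ n : ℕ, ∃ k : ℕ, ((n : ℚ) + 1) / 10 ^ k ≤ x.trunc k - y.trunc k := by
    intro n
    induction n with
    | zero => exact ⟨m, by simpa using hm⟩
    | succ n ih =>
      obtain ⟨k, hk⟩ := ih
      obtain ⟨k2, hk2, hd9⟩ := hy (k + 1)
      have hkk : k < k2 := hk2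
      have hxmono : x.trunc k ≤ x.trunc k2 := trunc_mono x (le_of_lt hkk)
      have hytail : y.trunc k2 - y.trunc k ≤ 1 / 10 ^ k - 2 / 10 ^ k2 :=
        tail_le' y hkk (by omega)
      refine ⟨k2, ?_⟩
      have hstep : (10:ℚ) ^ (k+1) ≤ 10 ^ k2 := by
        apply pow_le_pow_right₀ (by norm_num) hkk
      have h10k : (0:ℚ) < 10 ^ k := by positivity
      have h10k2 : (0:ℚ) < 10 ^ k2 := by positivity
      -- diff at k2 ≥ diff at k - (1/10^k - 2/10^k2)
      have hlow : ((n:ℚ) + 1) / 10 ^ k - 1 / 10 ^ k + 2 / 10 ^ k2 ≤ x.trunc k2 - y.trunc k2 := by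
        have : x.trunc k2 - y.trunc k2 =
            (x.trunc k - y.trunc k) + (x.trunc k2 - x.trunc k) - (y.trunc k2 - y.trunc k) := by ring
        rw [this]; linarith
      refine le_trans ?_ hlow
      -- (n+2)/10^k2 ≤ n/10^k + 2/10^k2
      have h1 : ((n:ℚ)+1)/10^k - 1/10^k = (n:ℚ)/10^k := by ring
      rw [h1]
      have h2 : (n:ℚ)/10^k2 ≤ (n:ℚ)/10^k := by
        apply div_le_div_of_nonneg_left (by positivity) h10k
        calc (10:ℚ)^k ≤ 10^(k+1) := by apply pow_le_pow_right₀ (by norm_num); omega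
          _ ≤ 10^k2 := hstep
      have h3 : ((n:ℚ)+1+1)/10^k2 = (n:ℚ)/10^k2 + 2/10^k2 := by ring
      push_cast
      rw [h3]
      linarith
  obtain ⟨n, hn⟩ := exists_nat_gt C
  obtain ⟨k, hk⟩ := main n
  have hb := h k
  have h10k : (0:ℚ) < 10 ^ k := by positivity
  have : ((n:ℚ) + 1) / 10 ^ k ≤ C / 10 ^ k := le_trans hk (le_trans (le_abs_self _) hb)
  have := (div_le_div_iff_of_pos_right h10k).mp this
  linarith

lemma trunc_int (x : InfDec) (m : ℕ) :
    ∃ N : ℤ, x.trunc m * 10 ^ m = (N : ℚ) := by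
  refine ⟨x.z * 10 ^ m + ∑ i ∈ Finset.Icc 1 m, (x.d i : ℤ) * 10 ^ (m - i), ?_⟩
  unfold InfDec.trunc
  push_cast
  rw [add_mul, Finset.sum_mul]
  congr 1
  apply Finset.sum_congr rfl
  intro i hi
  have him : i ≤ m := (Finset.mem_Icc.mp hi).2
  have hpow : (10:ℚ) ^ (m - i) * 10 ^ i = 10 ^ m := by
    rw [← pow_add]; congr 1; omega
  have h10 : (10:ℚ) ^ i ≠ 0 := by positivity
  field_simp
  rw [mul_assoc, mul_comm ((10:ℚ) ^ i), hpow]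

lemma trunc_succ_sub (x : InfDec) {i : ℕ} (hi : 1 ≤ i) :
    x.trunc i - x.trunc (i - 1) = (x.d i : ℚ) / 10 ^ i := by
  rw [trunc_sub x (Nat.sub_le i 1)]
  have : Finset.Ioc (i - 1) i = {i} := by
    ext j; simp only [Finset.mem_Ioc, Finset.mem_singleton]; omega
  rw [this, Finset.sum_singleton]

lemma trunc_eq (x y : InfDec) (hx : x.Admissible) (hy : y.Admissible)
    (C : ℚ) (h : ∀ k : ℕ, |x.trunc k - y.trunc k| ≤ C / 10 ^ k) (m : ℕ) :
    x.trunc m = y.trunc m := by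
  by_contra hne
  obtain ⟨Nx, hNx⟩ := trunc_int x m
  obtain ⟨Ny, hNy⟩ := trunc_int y m
  have h10 : (0:ℚ) < 10 ^ m := by positivity
  have hne' : Nx ≠ Ny := by
    intro he
    apply hne
    have : x.trunc m * 10 ^ m = y.trunc m * 10 ^ m := by rw [hNx, hNy, he]
    exact mul_right_cancel₀ (ne_of_gt h10) this
  rcases lt_or_gt_of_ne hne' with hlt | hgt
  · apply grow y x hx C (fun k => by rw [abs_sub_comm]; exact h k) m
    have h1 : (1:ℚ) ≤ ((Ny : ℚ) - (Nx : ℚ)) := by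
      have h2 : Nx + 1 ≤ Ny := hlt
      have h3 : ((Nx + 1 : ℤ) : ℚ) ≤ ((Ny : ℤ) : ℚ) := by exact_mod_cast h2
      push_cast at h3
      linarith
    have : y.trunc m - x.trunc m = ((Ny:ℚ) - (Nx:ℚ)) / 10 ^ m := by
      rw [eq_div_iff (ne_of_gt h10)]
      rw [sub_mul, hNx, hNy]
    rw [this]
    gcongr
  · apply grow x y hy C h m
    have h1 : (1:ℚ) ≤ ((Nx : ℚ) - (Ny : ℚ)) := by
      have h2 : Ny + 1 ≤ Nx := hgt
      have h3 : ((Ny + 1 : ℤ) : ℚ) ≤ ((Nx : ℤ) : ℚ) := by exact_mod_cast h2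
      push_cast at h3
      linarith
    have : x.trunc m - y.trunc m = ((Nx:ℚ) - (Ny:ℚ)) / 10 ^ m := by
      rw [eq_div_iff (ne_of_gt h10)]
      rw [sub_mul, hNx, hNy]
    rw [this]
    gcongr

theorem stmt1 (x y : InfDec) (hx : x.Admissible) (hy : y.Admissible)
    (C : ℚ) (hC : 0 ≤ C) (h : ∀ k : ℕ, |x.trunc k - y.trunc k| ≤ C / 10 ^ k) :
    x.z = y.z ∧ ∀ i, 1 ≤ i → x.d i = y.d i := by
  have key := trunc_eq x y hx hy C h
  constructor
  · have h0 := key 0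
    unfold InfDec.trunc at h0
    simp at h0
    exact_mod_cast h0
  · intro i hi
    have h1 := trunc_succ_sub x hi
    have h2 := trunc_succ_sub y hi
    have : (x.d i : ℚ) / 10 ^ i = (y.d i : ℚ) / 10 ^ i := by
      rw [← h1, ← h2, key i, key (i - 1)]
    have h10 : (10:ℚ) ^ i ≠ 0 := by positivity
    field_simp at this
    exact_mod_cast this
end

section
/- Let x and y be admissible infinite decimals. Then for every k ≥ 0 one has |T_k(val(x) + val(y)) − x_k − y_k| ≤ 4·10^{-k}, where x_k, y_k are the k-th rational truncations, val denotes the real value, and T_k(r) = ⌊10^k r⌋/10^k is the k-th truncation of the real number r. -/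
lemma InfDec.summable (x : InfDec) :
    Summable (fun i : ℕ => (x.d (i + 1) : ℝ) / 10 ^ (i + 1)) := by
  refine Summable.of_nonneg_of_le (fun i => by positivity) ?_
    (summable_geometric_of_lt_one (r := (1/10:ℝ)) (by norm_num) (by norm_num))
  intro i
  have h2 : ((x.d (i+1) : ℝ)) ≤ 9 := by exact_mod_cast x.d_le (i+1) (by omega)
  have h3 : (0:ℝ) < 10 ^ (i+1) := by positivity
  rw [div_le_iff₀ h3, div_pow, one_pow, div_mul_eq_mul_div, le_div_iff₀ (by positivity)]
  calc (x.d (i+1) : ℝ) * 10 ^ i ≤ 9 * 10 ^ i :=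
        mul_le_mul_of_nonneg_right h2 (by positivity)
    _ ≤ 1 * 10 ^ (i+1) := by rw [pow_succ]; nlinarith [pow_pos (show (0:ℝ)<10 by norm_num) i]

lemma InfDec.val_sub_trunc (x : InfDec) (k : ℕ) :
    x.val - (x.trunc k : ℝ) = ∑' i : ℕ, (x.d (i + k + 1) : ℝ) / 10 ^ (i + k + 1) := by
  have hsum := x.summable
  have hpart := hsum.sum_add_tsum_nat_add (f := fun i : ℕ => (x.d (i + 1) : ℝ) / 10 ^ (i + 1)) k
  have htr : (x.trunc k : ℝ) = (x.z : ℝ) + ∑ i ∈ Finset.range k, (x.d (i + 1) : ℝ) / 10 ^ (i + 1) := by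
    rw [InfDec.trunc]
    push_cast
    congr 1
    rw [← Finset.Ico_add_one_right_eq_Icc, Finset.sum_Ico_eq_sum_range]
    simp [add_comm 1]
  rw [InfDec.val, htr]
  have : ∑' i : ℕ, (x.d (i + 1) : ℝ) / 10 ^ (i + 1)
      = (∑ i ∈ Finset.range k, (x.d (i + 1) : ℝ) / 10 ^ (i + 1))
        + ∑' i : ℕ, (x.d (i + k + 1) : ℝ) / 10 ^ (i + k + 1) := by
    rw [← hpart]
  rw [this]; ring

lemma InfDec.tail_bounds (x : InfDec) (k : ℕ) :
    0 ≤ x.val - (x.trunc k : ℝ) ∧ x.val - (x.trunc k : ℝ) ≤ 1 / 10 ^ k := by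
  rw [x.val_sub_trunc k]
  have hsum : Summable (fun i : ℕ => (x.d (i + k + 1) : ℝ) / 10 ^ (i + k + 1)) := by
    have := x.summable
    have h := (summable_nat_add_iff (f := fun i : ℕ => (x.d (i + 1) : ℝ) / 10 ^ (i + 1)) k).2 this
    simpa [add_right_comm] using h
  constructor
  · exact tsum_nonneg fun i => by positivity
  · have hg : Summable (fun i : ℕ => (9 / 10 ^ (k+1) : ℝ) * (1/10) ^ i) :=
      (summable_geometric_of_lt_one (by norm_num) (by norm_num)).mul_left _
    have hle : ∀ i : ℕ, (x.d (i + k + 1) : ℝ) / 10 ^ (i + k + 1)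
        ≤ (9 / 10 ^ (k+1) : ℝ) * (1/10) ^ i := by
      intro i
      have h2 : ((x.d (i+k+1) : ℝ)) ≤ 9 := by exact_mod_cast x.d_le (i+k+1) (by omega)
      have : (9 / 10 ^ (k+1) : ℝ) * (1/10) ^ i = 9 / 10 ^ (i + k + 1) := by
        rw [div_pow, one_pow]
        field_simp
        ring
      rw [this]
      exact div_le_div_of_nonneg_right h2 (by positivity) |>.trans_eq rfl
    calc ∑' i : ℕ, (x.d (i + k + 1) : ℝ) / 10 ^ (i + k + 1)
        ≤ ∑' i : ℕ, (9 / 10 ^ (k+1) : ℝ) * (1/10) ^ i := Summable.tsum_le_tsum hle hsum hg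
      _ = (9 / 10 ^ (k+1) : ℝ) * (1 - 1/10)⁻¹ := by
          rw [tsum_mul_left, tsum_geometric_of_lt_one (by norm_num) (by norm_num)]
      _ = 1 / 10 ^ k := by
          rw [pow_succ]; field_simp; ring
  
theorem stmt8 (x y : InfDec) (hx : x.Admissible) (hy : y.Admissible) (k : ℕ) :
    |Tr k (x.val + y.val) - (x.trunc k : ℝ) - (y.trunc k : ℝ)| ≤ 4 / 10 ^ k := by
  obtain ⟨hx0, hx1⟩ := x.tail_bounds k
  obtain ⟨hy0, hy1⟩ := y.tail_bounds k
  have h10 : (0:ℝ) < 10 ^ k := by positivity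
  have hu : (0:ℝ) < 1 / 10 ^ k := by positivity
  have hfl1 : (⌊(10:ℝ) ^ k * (x.val + y.val)⌋ : ℝ) ≤ 10 ^ k * (x.val + y.val) := Int.floor_le _
  have hfl2 : 10 ^ k * (x.val + y.val) - 1 < (⌊(10:ℝ) ^ k * (x.val + y.val)⌋ : ℝ) :=
    Int.sub_one_lt_floor _
  have hT1 : Tr k (x.val + y.val) ≤ x.val + y.val := by
    rw [Tr, div_le_iff₀ h10]
    linarith [hfl1]
  have hT2 : x.val + y.val - 1 / 10 ^ k ≤ Tr k (x.val + y.val) := by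
    rw [Tr, le_div_iff₀ h10]
    have e : (x.val + y.val - 1 / 10 ^ k) * 10 ^ k = 10 ^ k * (x.val + y.val) - 1 := by
      field_simp
    rw [e]
    linarith [hfl2]
  have e4 : (4:ℝ) / 10 ^ k = 4 * (1 / 10 ^ k) := by ring
  rw [abs_le, e4]
  constructor <;> linarith
end

section
/- Let x and y be admissible infinite decimals with nonnegative integer parts, let s ≥ 0 satisfy val(x) + val(y) ≤ 10^s, and let k ≥ 1 satisfy θ_k(x_{k+s}·y_{k+s}) ≠ 9. Then 0 ≤ val(x)·val(y) − T_{k−1}(x_{k+s}·y_{k+s}) < 10^{-(k−1)}; consequently the (k−1)-th truncation of the real number val(x)·val(y) equals T_{k−1}(x_{k+s}·y_{k+s}). -/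
noncomputable def InfDec.f (x : InfDec) (i : ℕ) : ℝ := (x.d (i+1) : ℝ) / 10 ^ (i+1)

lemma InfDec.f_nonneg (x : InfDec) (i : ℕ) : 0 ≤ x.f i := by
  unfold InfDec.f; positivity

lemma InfDec.f_le (x : InfDec) (i : ℕ) : x.f i ≤ 9 / 10 ^ (i+1) := by
  have h : (x.d (i+1) : ℝ) ≤ 9 := by exact_mod_cast x.d_le (i+1) (by omega)
  have hp : (0:ℝ) < 10 ^ (i+1) := by positivity
  unfold InfDec.f
  exact div_le_div_of_nonneg_right h hp.le

lemma geo_summable (c : ℝ) : Summable (fun i : ℕ => c * (1/10)^i) := by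
  have h := summable_geometric_of_lt_one (r := (1/10:ℝ)) (by norm_num) (by norm_num)
  exact h.mul_left c

lemma InfDec.f_summable (x : InfDec) : Summable x.f := by
  refine Summable.of_nonneg_of_le x.f_nonneg (fun i => ?_) (geo_summable (9/10))
  calc x.f i ≤ 9 / 10^(i+1) := x.f_le i
  _ = (9/10) * (1/10:ℝ)^i := by
      rw [div_pow, one_pow, pow_succ]; ring

lemma InfDec.val_eq (x : InfDec) : x.val = (x.z : ℝ) + ∑' i, x.f i := rfl

lemma InfDec.trunc_real (x : InfDec) (m : ℕ) :
    ((x.trunc m : ℚ) : ℝ) = (x.z : ℝ) + ∑ i ∈ Finset.range m, x.f i := by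
  unfold InfDec.trunc InfDec.f
  push_cast
  congr 1
  rw [show Finset.Icc 1 m = Finset.Ico 1 (m+1) by rw [Finset.Ico_add_one_right_eq_Icc],
    Finset.sum_Ico_eq_sum_range]
  simp only [Nat.add_sub_cancel]
  exact Finset.sum_congr rfl fun i _ => by rw [add_comm 1 i]

lemma InfDec.trunc_le_val (x : InfDec) (m : ℕ) : ((x.trunc m : ℚ) : ℝ) ≤ x.val := by
  rw [x.trunc_real, x.val_eq]
  gcongr
  exact Summable.sum_le_tsum _ (fun i _ => x.f_nonneg i) x.f_summable

lemma InfDec.val_le_trunc (x : InfDec) (m : ℕ) :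
    x.val ≤ ((x.trunc m : ℚ) : ℝ) + (1/10) ^ m := by
  rw [x.trunc_real, x.val_eq]
  have h1 : ∑' i, x.f i = ∑ i ∈ Finset.range m, x.f i + ∑' i, x.f (i + m) :=
    (Summable.sum_add_tsum_nat_add m x.f_summable).symm
  have h2 : ∑' i, x.f (i + m) ≤ (1/10:ℝ) ^ m := by
    have hg : ∀ i, x.f (i + m) ≤ (9 / 10 ^ (m+1)) * (1/10:ℝ)^i := by
      intro i
      calc x.f (i+m) ≤ 9 / 10 ^ (i+m+1) := x.f_le _
      _ = (9 / 10 ^ (m+1)) * (1/10:ℝ)^i := by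
          rw [div_pow, one_pow, show i + m + 1 = (m+1) + i by ring, pow_add]
          field_simp
    calc ∑' i, x.f (i+m) ≤ ∑' i, (9 / 10 ^ (m+1)) * (1/10:ℝ)^i :=
          Summable.tsum_le_tsum hg ((summable_nat_add_iff m).2 x.f_summable) (geo_summable _)
    _ = (9/10^(m+1)) * (1 - 1/10)⁻¹ := by
          rw [tsum_mul_left, tsum_geometric_of_lt_one (by norm_num) (by norm_num)]
    _ = (1/10:ℝ)^m := by
          rw [div_pow, one_pow, pow_succ]
          norm_num
          ring
  linarith

lemma InfDec.trunc_nonneg (x : InfDec) (hz : 0 ≤ x.z) (m : ℕ) : (0:ℚ) ≤ x.trunc m := by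
  unfold InfDec.trunc
  have : (0:ℚ) ≤ (x.z : ℚ) := by exact_mod_cast hz
  have h2 : (0:ℚ) ≤ ∑ i ∈ Finset.Icc 1 m, (x.d i : ℚ) / 10 ^ i :=
    Finset.sum_nonneg fun i _ => by positivity
  linarith

theorem stmt14 (x y : InfDec) (hx : x.Admissible) (hy : y.Admissible)
    (hxz : 0 ≤ x.z) (hyz : 0 ≤ y.z) (s : ℕ) (hs : x.val + y.val ≤ 10 ^ s)
    (k : ℕ) (hk : 1 ≤ k) (h : digq k (x.trunc (k + s) * y.trunc (k + s)) ≠ 9) :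
    (0 ≤ x.val * y.val - (Tq (k - 1) (x.trunc (k + s) * y.trunc (k + s)) : ℝ) ∧
      x.val * y.val - (Tq (k - 1) (x.trunc (k + s) * y.trunc (k + s)) : ℝ)
        < 1 / 10 ^ (k - 1)) ∧
    Tr (k - 1) (x.val * y.val)
      = (Tq (k - 1) (x.trunc (k + s) * y.trunc (k + s)) : ℝ) := by
  set m := k + s with hm
  set q : ℚ := x.trunc m * y.trunc m with hqdef
  set a : ℝ := ((x.trunc m : ℚ) : ℝ) with hadef
  set b : ℝ := ((y.trunc m : ℚ) : ℝ) with hbdef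
  set A : ℝ := x.val with hAdef
  set B : ℝ := y.val with hBdef
  set ε : ℝ := (1/10) ^ m with hεdef
  have ha0 : 0 ≤ a := by rw [hadef]; exact_mod_cast x.trunc_nonneg hxz m
  have hb0 : 0 ≤ b := by rw [hbdef]; exact_mod_cast y.trunc_nonneg hyz m
  have haA : a ≤ A := x.trunc_le_val m
  have hbB : b ≤ B := y.trunc_le_val m
  have hAa : A ≤ a + ε := x.val_le_trunc m
  have hBb : B ≤ b + ε := y.val_le_trunc m
  have hA0 : 0 ≤ A := ha0.trans haA
  have hB0 : 0 ≤ B := hb0.trans hbB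
  have hε0 : 0 ≤ ε := by positivity
  have hqab : ((q : ℚ) : ℝ) = a * b := by push_cast [hqdef]; ring
  -- lower and upper bounds on A*B
  have hlow : a * b ≤ A * B := mul_le_mul haA hbB hb0 hA0
  have hup : A * B ≤ a * b + ε * 10 ^ s := by
    have h1 : A * (B - b) ≤ A * ε := mul_le_mul_of_nonneg_left (by linarith) hA0
    have h2 : (A - a) * b ≤ ε * b := mul_le_mul_of_nonneg_right (by linarith) hb0
    have h3 : ε * (A + B) ≤ ε * 10 ^ s := mul_le_mul_of_nonneg_left hs hε0
    nlinarith
  have hεs : ε * 10 ^ s = 1 / 10 ^ k := by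
    rw [hεdef, hm, div_pow, one_pow, pow_add]
    field_simp
  rw [hεs] at hup
  -- floor arithmetic on q
  set n : ℤ := ⌊(10 : ℚ) ^ (k - 1) * q⌋ with hndef
  have hk10 : (10 : ℚ) ^ k = 10 * (10 : ℚ) ^ (k - 1) := by
    conv_lhs => rw [show k = (k - 1) + 1 by omega]
    rw [pow_succ]; ring
  have hdig : digq k q = ⌊(10 : ℚ) ^ k * q⌋ - 10 * n := rfl
  have hfl1 : (n : ℚ) ≤ (10 : ℚ) ^ (k - 1) * q := Int.floor_le _
  have hfl2 : (10 : ℚ) ^ (k - 1) * q < n + 1 := Int.lt_floor_add_one _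
  have hd0 : 0 ≤ digq k q := by
    rw [hdig, hk10, mul_assoc]
    have h3 : (10 * n : ℤ) ≤ ⌊(10 : ℚ) * ((10 : ℚ) ^ (k - 1) * q)⌋ :=
      Int.le_floor.2 (by push_cast; linarith)
    omega
  have hd9 : digq k q ≤ 9 := by
    rw [hdig, hk10, mul_assoc]
    have h3 : ⌊(10 : ℚ) * ((10 : ℚ) ^ (k - 1) * q)⌋ < 10 * n + 10 :=
      Int.floor_lt.2 (by push_cast; linarith)
    omega
  have hd8 : digq k q ≤ 8 := by omega
  have hqlt : (10 : ℚ) ^ k * q < 10 * n + 9 := by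
    have h1 := Int.lt_floor_add_one ((10 : ℚ) ^ k * q)
    rw [hdig] at hd8
    have h2 : ⌊(10 : ℚ) ^ k * q⌋ ≤ 10 * n + 8 := by omega
    have h3 : (⌊(10 : ℚ) ^ k * q⌋ : ℚ) ≤ ((10 * n + 8 : ℤ) : ℚ) := Int.cast_le.2 h2
    push_cast at h3
    linarith
  -- transfer to ℝ
  have hqltR : (10 : ℝ) ^ k * (a * b) < 10 * n + 9 := by
    have h2 : (((10 : ℚ) ^ k * q : ℚ) : ℝ) < (((10 * n + 9 : ℚ)) : ℝ) := Rat.cast_lt.2 hqlt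
    push_cast at h2
    rw [hqab] at h2
    linarith
  have hnleR : (n : ℝ) ≤ (10 : ℝ) ^ (k - 1) * (a * b) := by
    have h2 : (((n : ℚ)) : ℝ) ≤ (((10 : ℚ) ^ (k - 1) * q : ℚ) : ℝ) := Rat.cast_le.2 hfl1
    push_cast at h2
    rw [hqab] at h2
    linarith
  have hk10R : (10 : ℝ) ^ k = 10 * (10 : ℝ) ^ (k - 1) := by
    conv_lhs => rw [show k = (k - 1) + 1 by omega]
    rw [pow_succ]; ring
  have hpow_inv : (10 : ℝ) ^ k * (1 / 10 ^ k) = 1 := by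
    field_simp
  have hABup : (10 : ℝ) ^ (k - 1) * (A * B) < n + 1 := by
    have h1 : (10 : ℝ) ^ k * (A * B) ≤ (10 : ℝ) ^ k * (a * b) + 1 := by
      calc (10 : ℝ) ^ k * (A * B) ≤ (10 : ℝ) ^ k * (a * b + 1 / 10 ^ k) := by
            apply mul_le_mul_of_nonneg_left hup (by positivity)
      _ = (10 : ℝ) ^ k * (a * b) + 1 := by rw [mul_add, hpow_inv]
    have h2 : (10 : ℝ) ^ k * (A * B) = 10 * ((10 : ℝ) ^ (k - 1) * (A * B)) := by
      rw [hk10R]; ring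
    linarith
  have hABlo : (n : ℝ) ≤ (10 : ℝ) ^ (k - 1) * (A * B) := by
    have : (10 : ℝ) ^ (k - 1) * (a * b) ≤ (10 : ℝ) ^ (k - 1) * (A * B) :=
      mul_le_mul_of_nonneg_left hlow (by positivity)
    linarith
  have hfloorP : ⌊(10 : ℝ) ^ (k - 1) * (A * B)⌋ = n :=
    Int.floor_eq_iff.2 ⟨hABlo, by exact_mod_cast hABup⟩
  have hTq : ((Tq (k - 1) q : ℚ) : ℝ) = (n : ℝ) / 10 ^ (k - 1) := by
    unfold Tq; rw [← hndef]; push_cast; ring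
  have hc : (0 : ℝ) < 10 ^ (k - 1) := by positivity
  refine ⟨⟨?_, ?_⟩, ?_⟩
  · rw [hTq, sub_nonneg, div_le_iff₀ hc]
    calc (n : ℝ) ≤ 10 ^ (k - 1) * (a * b) := hnleR
    _ ≤ 10 ^ (k - 1) * (A * B) := mul_le_mul_of_nonneg_left hlow (by positivity)
    _ = A * B * 10 ^ (k - 1) := by ring
  · rw [hTq, sub_lt_iff_lt_add, ← add_div, lt_div_iff₀ hc]
    calc A * B * 10 ^ (k - 1) = 10 ^ (k - 1) * (A * B) := by ring
    _ < n + 1 := hABup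
    _ = 1 + n := by ring
  · rw [hTq]; unfold Tr
    rw [hfloorP]
end

section
/- Let x = (z, d) be an infinite decimal whose rational truncations satisfy x_k² < 2 < (x_k + 10^{-k})² for every k ≥ 0. Then x is admissible, i.e., d(k) < 9 for infinitely many k. (In other words, the decimal string of √2 defined by these truncation inequalities is not eventually 9.) -/
lemma trunc_succ (x : InfDec) (k : ℕ) :
    x.trunc (k + 1) = x.trunc k + (x.d (k + 1) : ℚ) / 10 ^ (k + 1) := by
  unfold InfDec.trunc
  rw [Finset.sum_Icc_succ_top (by omega : 1 ≤ k + 1)]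
  ring

lemma trunc_ge (x : InfDec) (k : ℕ) : (x.z : ℚ) ≤ x.trunc k := by
  unfold InfDec.trunc
  have : (0:ℚ) ≤ ∑ i ∈ Finset.Icc 1 k, (x.d i : ℚ) / 10 ^ i :=
    Finset.sum_nonneg fun i _ => by positivity
  linarith

theorem stmt16 (x : InfDec)
    (h : ∀ k : ℕ, (x.trunc k) ^ 2 < 2 ∧ 2 < (x.trunc k + 1 / 10 ^ k) ^ 2) :
    x.Admissible := by
  by_contra hc
  unfold InfDec.Admissible at hc
  push_neg at hc
  obtain ⟨N₀, hN₀⟩ := hc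
  set N := max N₀ 1 with hN
  have hall : ∀ j, N ≤ j → x.d j = 9 := fun j hj =>
    le_antisymm (x.d_le j (by omega)) (hN₀ j (by omega))
  set q : ℚ := x.trunc N + 1 / 10 ^ N with hq
  have hconst : ∀ k, N ≤ k → x.trunc k + 1 / 10 ^ k = q := by
    intro k hk
    induction k, hk using Nat.le_induction with
    | base => rfl
    | succ n hn ih =>
      rw [trunc_succ, hall (n+1) (by omega)]
      rw [← ih]; push_cast; ring
  have hq2 : 2 < q ^ 2 := (h N).2
  -- q > 0
  have hz : (x.z : ℚ) ^ 2 < 2 := by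
    have := (h 0).1
    simpa [InfDec.trunc] using this
  have hzge : (-1 : ℚ) ≤ (x.z : ℚ) := by
    by_contra hlt
    push_neg at hlt
    have : (x.z : ℚ) ≤ -2 := by
      have : x.z < -1 := by exact_mod_cast hlt
      exact_mod_cast (by omega : x.z ≤ -2)
    nlinarith
  have hqge : (-1 : ℚ) ≤ q := by
    have h1 : (x.z : ℚ) ≤ x.trunc N := trunc_ge x N
    have h2 : (0:ℚ) < 1 / 10 ^ N := by positivity
    rw [hq]
    linarith
  have hqpos : 0 < q := by nlinarith
  -- choose large k
  obtain ⟨n, hn⟩ := pow_unbounded_of_one_lt (2 * q / (q ^ 2 - 2)) (by norm_num : (1:ℚ) < 10)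
  set k := max n N with hk
  have h10 : (2 * q / (q ^ 2 - 2)) < 10 ^ k := by
    calc 2 * q / (q ^ 2 - 2) < 10 ^ n := hn
    _ ≤ 10 ^ k := by exact pow_le_pow_right₀ (by norm_num) (le_max_left n N)
  have hkey : 2 * q < (q ^ 2 - 2) * 10 ^ k := by
    rw [div_lt_iff₀ (by linarith)] at h10
    linarith
  have htr : x.trunc k = q - 1 / 10 ^ k := by
    have := hconst k (le_max_right n N)
    linarith
  have hlt := (h k).1
  rw [htr] at hlt
  have hpow : (0:ℚ) < 10 ^ k := by positivity
  have hkey2 : 2 * q / 10 ^ k < q ^ 2 - 2 := by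
    rw [div_lt_iff₀ hpow]; linarith
  have hs : (0:ℚ) ≤ (1 / 10 ^ k) ^ 2 := by positivity
  have : (q - 1 / 10 ^ k) ^ 2 = q ^ 2 - 2 * q / 10 ^ k + (1/10^k)^2 := by
    field_simp; ring
  nlinarith
end
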